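/- arXiv:2410.22055 — 4 statements merged into one kernel-verified Lean document; each statement's English description precedes it below -/
import Mathlib

section
/- Let A be a unital complex C*-algebra, k a closed two-sided ideal of A, and ℓ : A → ℂ a continuous linear functional with ℓ(1) = 1 and ℓ(x) = 0 for all x ∈ k. Fix n ∈ A with n ∉ k and set N(a) = ℓ(a)·n. Then the condition that N([v, N(w)]) + N([N(v), w]) − [N(v), N(w)] − N(N([v, w])) ∈ k for all v, w ∈ A holds if and only if both: (i) ℓ([v, n]) = 0 for all v ∈ A, and (ii) ℓ([v, w])·ℓ(n) = 0 for all v, w ∈ A. In particular, if ℓ(n) ≠ 0, the condition is equivalent to ℓ([v,w]) = 0 for all v, w ∈ A. -/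
lemma smul_mem_twosided_iff {A : Type*} [CStarAlgebra A] (k : TwoSidedIdeal A)
    (n : A) (hn : n ∉ k) (c : ℂ) : c • n ∈ k ↔ c = 0 := by
  constructor
  · intro h
    by_contra hc
    have : n ∈ k := by
      have := k.mul_mem_left (c⁻¹ • (1 : A)) _ h
      rwa [smul_mul_assoc, one_mul, smul_smul, inv_mul_cancel₀ hc, one_smul] at this
    exact hn this
  · rintro rfl; simpa using k.zero_mem

/-- Let `ℓ : A → ℂ` be a continuous functional with `ℓ 1 = 1` vanishing on a closed two-sided
ideal `k`, `n ∉ k`, and `N a = ℓ(a) • n`.  The Nijenhuis condition (torsion valued in `k`) holds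
iff `ℓ([v,n]) = 0` for all `v` and `ℓ([v,w])·ℓ(n) = 0` for all `v, w`; and when `ℓ n ≠ 0` it is
equivalent to `ℓ([v,w]) = 0` for all `v, w`. -/
theorem rank_one_nijenhuis_condition
    {A : Type*} [CStarAlgebra A]
    (k : TwoSidedIdeal A) (hk : IsClosed (k : Set A))
    (ℓ : A →L[ℂ] ℂ) (hone : ℓ 1 = 1) (hℓ : ∀ x ∈ k, ℓ x = 0)
    (n : A) (hn : n ∉ k) :
    letI N : A → A := fun a => ℓ a • n
    ((∀ v w : A,
        N (v * N w - N w * v) + N (N v * w - w * N v)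
          - (N v * N w - N w * N v) - N (N (v * w - w * v)) ∈ k)
      ↔ ((∀ v : A, ℓ (v * n - n * v) = 0) ∧ ∀ v w : A, ℓ (v * w - w * v) * ℓ n = 0)) ∧
    (ℓ n ≠ 0 →
      ((∀ v w : A,
        N (v * N w - N w * v) + N (N v * w - w * N v)
          - (N v * N w - N w * N v) - N (N (v * w - w * v)) ∈ k)
      ↔ ∀ v w : A, ℓ (v * w - w * v) = 0)) := by
  set N : A → A := fun a => ℓ a • n with hN
  have key : ∀ v w : A,
      N (v * N w - N w * v) + N (N v * w - w * N v)
        - (N v * N w - N w * N v) - N (N (v * w - w * v))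
      = (ℓ w * ℓ (v * n - n * v) - ℓ v * ℓ (w * n - n * w)
          - ℓ (v * w - w * v) * ℓ n) • n := by
    intro v w
    show (ℓ (v * (ℓ w • n) - (ℓ w • n) * v)) • n + (ℓ ((ℓ v • n) * w - w * (ℓ v • n))) • n
        - ((ℓ v • n) * (ℓ w • n) - (ℓ w • n) * (ℓ v • n))
        - (ℓ ((ℓ (v * w - w * v)) • n)) • n = _
    simp only [mul_smul_comm, smul_mul_assoc, map_sub, map_smul, smul_eq_mul, smul_smul]
    rw [mul_comm (ℓ w) (ℓ v)]
    module
  have mem_iff : ∀ v w : A,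
      (N (v * N w - N w * v) + N (N v * w - w * N v)
        - (N v * N w - N w * N v) - N (N (v * w - w * v)) ∈ k)
      ↔ (ℓ w * ℓ (v * n - n * v) - ℓ v * ℓ (w * n - n * w)
          - ℓ (v * w - w * v) * ℓ n = 0) := by
    intro v w
    rw [key v w, smul_mem_twosided_iff k n hn]
  have main : (∀ v w : A,
      N (v * N w - N w * v) + N (N v * w - w * N v)
        - (N v * N w - N w * N v) - N (N (v * w - w * v)) ∈ k)
      ↔ ((∀ v : A, ℓ (v * n - n * v) = 0) ∧ ∀ v w : A, ℓ (v * w - w * v) * ℓ n = 0) := by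
    constructor
    · intro h
      have h1 : ∀ v : A, ℓ (v * n - n * v) = 0 := by
        intro v
        have := (mem_iff v 1).mp (h v 1)
        simpa [hone, mul_one, one_mul, sub_self] using this
      refine ⟨h1, fun v w => ?_⟩
      have := (mem_iff v w).mp (h v w)
      rw [h1 v, h1 w] at this
      linear_combination -this
    · rintro ⟨h1, h2⟩ v w
      rw [mem_iff]
      rw [h1 v, h1 w, h2 v w]
      ring
  refine ⟨main, fun hℓn => ?_⟩
  rw [main]
  constructor
  · rintro ⟨h1, h2⟩ v w
    exact (mul_eq_zero.mp (h2 v w)).resolve_right hℓn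
  · intro h
    exact ⟨fun v => h v n, fun v w => by rw [h v w, zero_mul]⟩
end

section
/- Let A be a nontrivial unital complex Banach algebra (with ‖1‖ = 1, 1 ≠ 0). Then there exist no elements a, b ∈ A with a·b − b·a = 1. -/
/-!
If `a * b - b * a = 1`, then by induction `a * b ^ (n + 1) - b ^ (n + 1) * a = (n + 1) • b ^ n`.
Taking norms gives `(n + 1) * ‖b ^ n‖ ≤ 2 * ‖a‖ * ‖b‖ * ‖b ^ n‖`, so `b ^ n = 0` for large `n`;
but the same identity shows, by descending induction and torsion-freeness, that `b ^ n = 0`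
forces `1 = b ^ 0 = 0`.
-/

section Ring

variable {A : Type*} [Ring A] {a b : A}

theorem mul_pow_sub_pow_mul_of_mul_sub_mul_eq_one (h : a * b - b * a = 1) (n : ℕ) :
    a * b ^ (n + 1) - b ^ (n + 1) * a = (n + 1) • b ^ n := by
  induction n with
  | zero => simpa using h
  | succ n ih =>
    calc a * b ^ (n + 2) - b ^ (n + 2) * a
        = (a * b ^ (n + 1) - b ^ (n + 1) * a) * b + b ^ (n + 1) * (a * b - b * a) := by
          rw [pow_succ b (n + 1)]; noncomm_ring
      _ = (n + 2) • b ^ (n + 1) := by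
          rw [ih, h, mul_one, smul_mul_assoc, ← pow_succ]
          exact (succ_nsmul _ _).symm

theorem pow_ne_zero_of_mul_sub_mul_eq_one [Nontrivial A] [IsAddTorsionFree A]
    (h : a * b - b * a = 1) (n : ℕ) : b ^ n ≠ 0 := by
  induction n with
  | zero => simp
  | succ n ih =>
    intro hbn
    have hsmul := mul_pow_sub_pow_mul_of_mul_sub_mul_eq_one h n
    rw [hbn, mul_zero, zero_mul, sub_zero, eq_comm, nsmul_eq_zero_iff] at hsmul
    exact ih (hsmul.resolve_right n.succ_ne_zero)

end Ring

section NormedRing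

variable {A : Type*} [NormedRing A] [NormedSpace ℝ A] {a b : A}

theorem succ_mul_norm_pow_le_of_mul_sub_mul_eq_one (h : a * b - b * a = 1) (n : ℕ) :
    ((n : ℝ) + 1) * ‖b ^ n‖ ≤ 2 * ‖a‖ * ‖b‖ * ‖b ^ n‖ := by
  have hpow : ‖b ^ (n + 1)‖ ≤ ‖b ^ n‖ * ‖b‖ := pow_succ b n ▸ norm_mul_le _ _
  calc ((n : ℝ) + 1) * ‖b ^ n‖
      = ‖a * b ^ (n + 1) - b ^ (n + 1) * a‖ := by
        rw [mul_pow_sub_pow_mul_of_mul_sub_mul_eq_one h n, RCLike.norm_nsmul ℝ, nsmul_eq_mul]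
        push_cast; ring
    _ ≤ ‖a‖ * ‖b ^ (n + 1)‖ + ‖b ^ (n + 1)‖ * ‖a‖ :=
        (norm_sub_le _ _).trans (add_le_add (norm_mul_le _ _) (norm_mul_le _ _))
    _ ≤ 2 * ‖a‖ * ‖b‖ * ‖b ^ n‖ := by nlinarith [norm_nonneg a]

theorem pow_eq_zero_of_mul_sub_mul_eq_one {n : ℕ} (h : a * b - b * a = 1)
    (hn : 2 * ‖a‖ * ‖b‖ < n + 1) : b ^ n = 0 := by
  by_contra hbn
  have := succ_mul_norm_pow_le_of_mul_sub_mul_eq_one h n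
  exact (le_of_mul_le_mul_right this (norm_pos_iff.mpr hbn)).not_gt hn

end NormedRing

theorem no_commutator_eq_one_general
    {A : Type*} [NormedRing A] [NormedAlgebra ℂ A]
    [Nontrivial A] :
    ¬ ∃ a b : A, a * b - b * a = 1 := by
  rintro ⟨a, b, h⟩
  have : IsAddTorsionFree A := .of_isTorsionFree ℂ A
  obtain ⟨n, hn⟩ := exists_nat_gt (2 * ‖a‖ * ‖b‖)
  exact pow_ne_zero_of_mul_sub_mul_eq_one h n
    (pow_eq_zero_of_mul_sub_mul_eq_one h (hn.trans (lt_add_one _)))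

/-- Wintner–Wielandt: in a nontrivial unital complex Banach algebra, the identity is not a
commutator: there are no `a, b` with `a*b - b*a = 1`. -/
theorem no_commutator_eq_one
    {A : Type*} [NormedRing A] [NormOneClass A] [NormedAlgebra ℂ A]
    [CompleteSpace A] [Nontrivial A] :
    ¬ ∃ a b : A, a * b - b * a = 1 :=
  no_commutator_eq_one_general
end

section
/- Let H be an infinite-dimensional separable complex Hilbert space. There is no bounded operator d ∈ B(H) such that [d, [d, x]] + x is a compact operator for every x ∈ B(H), where [a,b] = ab − ba. In particular, no adjoint operator ad_d induces an almost complex structure on the homogeneous space B(H)ˣ/(1 + K(H))ˣ. -/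
/-- On an infinite-dimensional separable complex Hilbert space `H`, there is no bounded
operator `d` such that `[d,[d,x]] + x` is compact for every bounded operator `x`; hence no
adjoint operator `ad_d` induces an almost complex structure on
`B(H)ˣ/(1 + K(H))ˣ`. -/
theorem no_ad_almost_complex_structure
    {H : Type*} [NormedAddCommGroup H] [InnerProductSpace ℂ H] [CompleteSpace H]
    [TopologicalSpace.SeparableSpace H] (hH : ¬ FiniteDimensional ℂ H) :
    ¬ ∃ d : H →L[ℂ] H, ∀ x : H →L[ℂ] H,
        IsCompactOperator ⇑(d * (d * x - x * d) - (d * x - x * d) * d + x) := by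
  rintro ⟨d, hd⟩
  have h1 := hd 1
  have he : d * (d * 1 - 1 * d) - (d * 1 - 1 * d) * d + 1 = (1 : H →L[ℂ] H) := by
    simp
  rw [he] at h1
  have hcb : IsCompact (closure ((1 : H →L[ℂ] H) '' Metric.closedBall 0 1)) :=
    h1.isCompact_closure_image_closedBall 1
  have himg : (1 : H →L[ℂ] H) '' Metric.closedBall (0:H) 1 = Metric.closedBall (0 : H) 1 := by
    simp [Set.image_id']
  rw [himg, IsClosed.closure_eq Metric.isClosed_closedBall] at hcb
  exact hH (FiniteDimensional.of_isCompact_closedBall₀ ℂ one_pos hcb)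
end

section
/- Let A be a unital complex C*-algebra, k a proper closed two-sided ideal of A, and Q : A → A/k the quotient *-homomorphism onto the quotient C*-algebra. Then the set {Q(a) : a ∈ Aˣ} is an open subgroup of the group (A/k)ˣ of invertible elements of A/k; in particular it contains the connected component of the identity of (A/k)ˣ. -/
open CStarAlgebra in
/-- Let `A` be a unital complex C*-algebra, `k` a proper closed two-sided ideal, and
`Q : A → A/k` the quotient *-homomorphism onto the quotient C*-algebra `B = A/k` (formalized
as a surjective star algebra homomorphism onto a unital C*-algebra `B` whose kernel is `k`).
Then the image of `Aˣ` under `Q` is an open subgroup of `Bˣ`; in particular it contains the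
connected component of the identity of `Bˣ`. -/
theorem image_units_open_subgroup
    {A B : Type*} [CStarAlgebra A] [CStarAlgebra B]
    (k : TwoSidedIdeal A) (hk : IsClosed (k : Set A)) (hproper : (1 : A) ∉ k)
    (Q : A →⋆ₐ[ℂ] B) (hQ : Function.Surjective Q) (hker : ∀ x : A, Q x = 0 ↔ x ∈ k) :
    ∃ S : Subgroup Bˣ,
      (S : Set Bˣ) = Set.range (Units.map (Q : A →* B)) ∧
      IsOpen (S : Set Bˣ) ∧
      connectedComponent (1 : Bˣ) ⊆ (S : Set Bˣ) := by
  refine ⟨(Units.map (Q : A →* B)).range, (Units.map (Q : A →* B)).coe_range, ?_⟩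
  -- `Q` as a continuous linear map
  have hcont : Continuous Q := map_continuous Q
  let L : A →L[ℂ] B := ⟨Q.toAlgHom.toLinearMap, hcont⟩
  have hLQ : ∀ a, L a = Q a := fun a => rfl
  have hopenmap : IsOpenMap L := L.isOpenMap hQ
  have hset : (((Units.map (Q : A →* B)).range : Subgroup Bˣ) : Set Bˣ)
      = Units.val ⁻¹' (Q '' {a : A | IsUnit a}) := by
    ext b
    constructor
    · rintro ⟨u, rfl⟩
      exact ⟨(u : A), u.isUnit, rfl⟩
    · rintro ⟨a, ha, hab⟩
      exact ⟨ha.unit, Units.ext (by simpa using hab)⟩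
  have hopen : IsOpen (((Units.map (Q : A →* B)).range : Subgroup Bˣ) : Set Bˣ) := by
    rw [hset]
    have : IsOpen (Q '' {a : A | IsUnit a}) := by
      have := hopenmap _ Units.isOpen
      simpa [Set.image_image, hLQ] using this
    exact this.preimage Units.continuous_val
  refine ⟨hopen, ?_⟩
  have hclosed := Subgroup.isClosed_of_isOpen _ hopen
  exact (IsClopen.connectedComponent_subset ⟨hclosed, hopen⟩)
    (Subgroup.one_mem _)
end
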